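/- The cardinal B-spline φ of order m satisfies the two-scale relation: φ(x) = 2^{1-m} ∑_{k=0}^{m} (m choose k) φ(2x - k) for all real x. -/

import Mathlib

noncomputable def truncPow (t : ℝ) (k : ℕ) : ℝ := if 0 < t then t ^ k else 0

/-- The cardinal B-spline of order `m`. -/
noncomputable def bspline (m : ℕ) (x : ℝ) : ℝ :=
  (1 / (Nat.factorial m : ℝ)) *
    ∑ i ∈ Finset.range (m + 1),
      (-1 : ℝ) ^ i * (Nat.choose m i : ℝ) * truncPow (x - (i : ℝ)) (m - 1)

/-!
Write `T` for the backward shift `g ↦ g (· - 1)` acting on functions `ℝ → ℝ` and `g` for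
`t ↦ truncPow t (m - 1)`. Then `φ = (1 / m!) (1 - T)^m g`, and the right-hand sum is
`(1 / m!) ((1 + T)^m (1 - T)^m g)(2x) = (1 / m!) ((1 - T²)^m g)(2x)`. A shift by `2` before
dilating by `2` is a shift by `1` after it, so this equals `(1 / m!) ((1 - T)^m (g (2 ·)))(x)`,
and `g (2 ·) = 2^(m-1) g` by homogeneity.
-/

open Finset

lemma truncPow_mul_left {c : ℝ} (hc : 0 < c) (t : ℝ) (k : ℕ) :
    truncPow (c * t) k = c ^ k * truncPow t k := by
  simp only [truncPow, mul_pos_iff_of_pos_left hc]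
  split_ifs <;> simp [mul_pow]

noncomputable def backShift : Module.End ℝ (ℝ → ℝ) := LinearMap.funLeft ℝ ℝ fun x => x - 1

noncomputable def dilation (c : ℝ) : Module.End ℝ (ℝ → ℝ) := LinearMap.funLeft ℝ ℝ fun x => c * x

@[simp]
lemma backShift_apply (g : ℝ → ℝ) (x : ℝ) : backShift g x = g (x - 1) := rfl

@[simp]
lemma dilation_apply (c : ℝ) (g : ℝ → ℝ) (x : ℝ) : dilation c g x = g (c * x) := rfl

lemma backShift_pow_apply (n : ℕ) (g : ℝ → ℝ) (x : ℝ) : (backShift ^ n) g x = g (x - n) := by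
  induction n generalizing x with
  | zero => simp
  | succ n ih =>
    rw [pow_succ', Module.End.mul_apply, backShift_apply, ih]
    push_cast; ring_nf

lemma one_add_smul_backShift_pow_apply (c : ℝ) (m : ℕ) (g : ℝ → ℝ) (x : ℝ) :
    ((1 + c • backShift) ^ m) g x = ∑ k ∈ range (m + 1), c ^ k * m.choose k * g (x - k) := by
  rw [add_comm, (Commute.one_right _).add_pow, LinearMap.sum_apply, Finset.sum_apply]
  refine sum_congr rfl fun k _ => ?_
  simp only [smul_pow, one_pow, mul_one, Algebra.smul_mul_assoc, LinearMap.smul_apply,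
    Module.End.mul_apply, Module.End.natCast_apply, nsmul_eq_mul, Pi.smul_apply,
    backShift_pow_apply, Pi.mul_apply, Pi.natCast_apply, smul_eq_mul]
  ring

lemma dilation_mul_backShift_pow (d : ℕ) :
    dilation d * backShift ^ d = backShift * dilation d := by
  ext g x
  simp only [Module.End.mul_apply, dilation_apply, backShift_pow_apply, backShift_apply]
  ring_nf

lemma dilation_truncPow {c : ℝ} (hc : 0 < c) (k : ℕ) :
    dilation c (truncPow · k) = c ^ k • (truncPow · k) := by
  ext t
  simp [truncPow_mul_left hc]

lemma bspline_eq_backShift (m : ℕ) (x : ℝ) :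
    bspline m x = (m.factorial : ℝ)⁻¹ * ((1 - backShift) ^ m) (truncPow · (m - 1)) x := by
  rw [sub_eq_add_neg, ← neg_one_smul ℝ backShift, one_add_smul_backShift_pow_apply, bspline, one_div]

lemma dilation_two_mul_one_add_pow_mul_one_sub_pow (m : ℕ) :
    dilation 2 * ((1 + backShift) ^ m * (1 - backShift) ^ m) =
      (1 - backShift) ^ m * dilation 2 := by
  have hcomm : Commute (1 + backShift) (1 - backShift) :=
    (Commute.one_right _).sub_right ((Commute.one_left _).add_left (Commute.refl _))
  have hprod : (1 + backShift) * (1 - backShift) = 1 - backShift ^ 2 := by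
    simp only [add_mul, mul_sub, one_mul, mul_one, sq]; abel
  have hsemi : SemiconjBy (dilation 2) (1 - backShift ^ 2) (1 - backShift) := by
    have := dilation_mul_backShift_pow 2
    push_cast at this
    simp [SemiconjBy, mul_sub, sub_mul, this]
  rw [← hcomm.mul_pow, hprod]
  exact hsemi.pow_right m

/-- the two-scale relation
phi(x) = 2^(1-m) * sum_(k=0)^m (m choose k) phi(2x - k). -/
theorem bspline_two_scale (m : ℕ) (hm : 1 ≤ m) (x : ℝ) :
    bspline m x =
      (2 : ℝ) ^ (1 - (m : ℤ)) *
        ∑ k ∈ Finset.range (m + 1), (Nat.choose m k : ℝ) * bspline m (2 * x - (k : ℝ)) := by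
  set g : ℝ → ℝ := (truncPow · (m - 1))
  have hsum : ∑ k ∈ range (m + 1), (m.choose k : ℝ) * bspline m (2 * x - k) =
      (m.factorial : ℝ)⁻¹ * ((1 + backShift) ^ m * (1 - backShift) ^ m) g (2 * x) := by
    have := one_add_smul_backShift_pow_apply 1 m (((1 - backShift) ^ m) g) (2 * x)
    rw [one_smul] at this
    simp only [Module.End.mul_apply, this, mul_sum, one_pow, one_mul]
    exact sum_congr rfl fun k _ => by rw [bspline_eq_backShift]; ring
  have hscale : ((1 + backShift) ^ m * (1 - backShift) ^ m) g (2 * x) =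
      2 ^ (m - 1) * ((1 - backShift) ^ m) g x := by
    calc _ = (dilation 2 * ((1 + backShift) ^ m * (1 - backShift) ^ m)) g x := rfl
      _ = ((1 - backShift) ^ m) (dilation 2 g) x := by
        rw [dilation_two_mul_one_add_pow_mul_one_sub_pow, Module.End.mul_apply]
      _ = 2 ^ (m - 1) * ((1 - backShift) ^ m) g x := by
        rw [dilation_truncPow two_pos, map_smul]; rfl
  have hpow : (2 : ℝ) ^ (1 - (m : ℤ)) * 2 ^ (m - 1) = 1 := by
    rw [← zpow_natCast, ← zpow_add₀ two_ne_zero, Nat.cast_sub hm]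
    simp
  rw [hsum, hscale, bspline_eq_backShift]
  linear_combination (-(m.factorial : ℝ)⁻¹ * ((1 - backShift) ^ m) g x) * hpow
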